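/- Let n ≥ 2 be a fixed integer and let M > 0 be a constant. For each dimension m, let X_m be a nonnegative random variable with E[X_m] > 0 such that X_m ≤ M · E[X_m] almost surely, and let X_{m,1}, …, X_{m,n} be n independent copies of X_m. Assume the sandwich condition holds almost surely: min_{1≤i≤n} X_{m,i} ≤ E[X_m] ≤ max_{1≤i≤n} X_{m,i}. If for every ε > 0, lim_{m→∞} Pr[ max_{1≤i≤n} X_{m,i} ≤ (1+ε) · min_{1≤i≤n} X_{m,i} ] = 1, then lim_{m→∞} Var[X_m]/(E[X_m])² = 0. -/

import Mathlib

open MeasureTheory ProbabilityTheory Filter Topology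

/-!
On the event `A_ε = {max_i X_i ≤ (1 + ε) min_i X_i}` both `X_1` and `E[X]` lie in
`[min_i X_i, max_i X_i]`, an interval of length at most `ε min_i X_i ≤ ε E[X]`, so
`(X_1 - E[X])² ≤ ε² E[X]²`. Off `A_ε` the bound `0 ≤ X_1 ≤ M E[X]` still gives
`(X_1 - E[X])² ≤ (M² + 1) E[X]²`. Hence `RelVar(X) ≤ ε² + (M² + 1) P(A_εᶜ)`, and the
second term vanishes in the limit for every fixed `ε`.
-/

lemma sq_sub_le_sq_mul_of_mem_Icc {lo hi x c ε : ℝ} (hε : 0 ≤ ε)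
    (hx : x ∈ Set.Icc lo hi) (hc : c ∈ Set.Icc lo hi) (hspread : hi ≤ (1 + ε) * lo) :
    (x - c) ^ 2 ≤ (ε * c) ^ 2 := by
  have hεlo : ε * lo ≤ ε * c := mul_le_mul_of_nonneg_left hc.1 hε
  apply sq_le_sq'
  · linarith [hx.1, hc.2]
  · linarith [hx.2, hc.1]

lemma sq_sub_le_of_le_mul {x c M : ℝ} (hx : 0 ≤ x) (hc : 0 ≤ c) (hxM : x ≤ M * c) :
    (x - c) ^ 2 ≤ (M ^ 2 + 1) * c ^ 2 := by
  have hsq : x ^ 2 ≤ (M * c) ^ 2 := pow_le_pow_left₀ hx hxM 2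
  nlinarith [mul_nonneg hx hc]

section Variance

variable {Ω : Type*} [MeasurableSpace Ω] {μ : Measure Ω} [IsProbabilityMeasure μ]

lemma variance_le_add_mul_measureReal_compl {Y : Ω → ℝ} (hY : AEMeasurable Y μ)
    {A : Set Ω} (hA : MeasurableSet A) {δ K : ℝ} (hδ : 0 ≤ δ)
    (hgood : ∀ᵐ ω ∂μ, ω ∈ A → (Y ω - μ[Y]) ^ 2 ≤ δ)
    (hbad : ∀ᵐ ω ∂μ, (Y ω - μ[Y]) ^ 2 ≤ K) :
    variance Y μ ≤ δ + K * μ.real Aᶜ := by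
  have hbound : (fun ω => (Y ω - μ[Y]) ^ 2) ≤ᵐ[μ] fun ω => δ + Aᶜ.indicator (fun _ => K) ω := by
    filter_upwards [hgood, hbad] with ω hωgood hωbad
    by_cases hωA : ω ∈ A
    · simpa [hωA] using hωgood hωA
    · simp only [Set.indicator_of_mem (Set.mem_compl hωA)]
      linarith
  calc variance Y μ = ∫ ω, (Y ω - μ[Y]) ^ 2 ∂μ := variance_eq_integral hY
    _ ≤ ∫ ω, δ + Aᶜ.indicator (fun _ => K) ω ∂μ :=
      integral_mono_of_nonneg (ae_of_all _ fun ω => sq_nonneg _)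
        ((integrable_const _).add ((integrable_const _).indicator hA.compl)) hbound
    _ = δ + K * μ.real Aᶜ := by
      rw [integral_add (integrable_const _) ((integrable_const _).indicator hA.compl),
        integral_const, integral_indicator_const _ hA.compl]
      simp [mul_comm]

variable {ι : Type*} [Finite ι]

lemma variance_div_sq_le_of_spread {X : ι → Ω → ℝ} (hmeas : ∀ i, Measurable (X i))
    (i₀ : ι) (hnonneg : ∀ ω, 0 ≤ X i₀ ω) {M ε : ℝ} (hε : 0 ≤ ε) (hE : 0 < μ[X i₀])
    (hbdd : ∀ᵐ ω ∂μ, X i₀ ω ≤ M * μ[X i₀])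
    (hsandwich : ∀ᵐ ω ∂μ, (⨅ i, X i ω) ≤ μ[X i₀] ∧ μ[X i₀] ≤ ⨆ i, X i ω) :
    variance (X i₀) μ / μ[X i₀] ^ 2 ≤
      ε ^ 2 + (M ^ 2 + 1) * μ.real {ω | (⨆ i, X i ω) ≤ (1 + ε) * ⨅ i, X i ω}ᶜ := by
  have hA : MeasurableSet {ω | (⨆ i, X i ω) ≤ (1 + ε) * ⨅ i, X i ω} :=
    measurableSet_le (Measurable.iSup hmeas) (measurable_const.mul (Measurable.iInf hmeas))
  have hgood : ∀ᵐ ω ∂μ, (⨆ i, X i ω) ≤ (1 + ε) * (⨅ i, X i ω) →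
      (X i₀ ω - μ[X i₀]) ^ 2 ≤ (ε * μ[X i₀]) ^ 2 := by
    filter_upwards [hsandwich] with ω hω hspread
    refine sq_sub_le_sq_mul_of_mem_Icc hε ⟨?_, ?_⟩ hω hspread
    · exact ciInf_le (Set.finite_range fun i => X i ω).bddBelow i₀
    · exact le_ciSup (Set.finite_range fun i => X i ω).bddAbove i₀
  have hbad : ∀ᵐ ω ∂μ, (X i₀ ω - μ[X i₀]) ^ 2 ≤ (M ^ 2 + 1) * μ[X i₀] ^ 2 := by
    filter_upwards [hbdd] with ω hω
    exact sq_sub_le_of_le_mul (hnonneg ω) hE.le hω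
  have hvar := variance_le_add_mul_measureReal_compl (hmeas i₀).aemeasurable hA
    (sq_nonneg _) hgood hbad
  rw [div_le_iff₀ (by positivity)]
  linarith

end Variance

lemma tendsto_measureReal_compl_of_tendsto_one {α : Type*} {l : Filter α}
    {Ω : α → Type*} [∀ a, MeasurableSpace (Ω a)] {μ : ∀ a, Measure (Ω a)}
    [∀ a, IsProbabilityMeasure (μ a)] {A : ∀ a, Set (Ω a)} (hA : ∀ a, MeasurableSet (A a))
    (h : Tendsto (fun a => μ a (A a)) l (𝓝 1)) :
    Tendsto (fun a => (μ a).real (A a)ᶜ) l (𝓝 0) := by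
  have hreal : Tendsto (fun a => (μ a).real (A a)) l (𝓝 1) := by
    simpa [Function.comp_def, measureReal_def] using
      (ENNReal.tendsto_toReal ENNReal.one_ne_top).comp h
  simp_rw [probReal_compl_eq_one_sub (hA _)]
  simpa using hreal.const_sub 1

lemma tendsto_zero_of_forall_le_sq_add {α : Type*} {l : Filter α} {f : α → ℝ}
    {p : ℝ → α → ℝ} {C : ℝ} (hf : ∀ a, 0 ≤ f a) (hp : ∀ ε > 0, Tendsto (p ε) l (𝓝 0))
    (hle : ∀ ε > 0, ∀ a, f a ≤ ε ^ 2 + C * p ε a) :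
    Tendsto f l (𝓝 0) := by
  refine tendsto_order.2 ⟨fun b hb => .of_forall fun a => hb.trans_le (hf a), fun b hb => ?_⟩
  set ε := Real.sqrt (b / 2)
  have hε : 0 < ε := Real.sqrt_pos.2 (by linarith)
  have hεsq : ε ^ 2 = b / 2 := Real.sq_sqrt (by linarith)
  have hCp : Tendsto (fun a => C * p ε a) l (𝓝 0) := by simpa using (hp ε hε).const_mul C
  filter_upwards [hCp.eventually_lt_const (half_pos hb)] with a ha
  linarith [hle ε hε a]

/-- Durrant–Kabán converse direction, paper Theorem 4.1, "⟸":
Suppose `X_m ≤ M·E[X_m]` almost surely and the sandwich condition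
`min_i X_{m,i} ≤ E[X_m] ≤ max_i X_{m,i}` holds almost surely.  If for every `ε > 0`
the probability that the maximum of the `n` independent copies is at most `(1+ε)`
times their minimum tends to `1`, then the relative variance
`Var[X_m]/(E[X_m])²` tends to `0`. -/
theorem stmt_1 {n : ℕ} (hn : 2 ≤ n) {M : ℝ}
    (Ω : ℕ → Type) [∀ m, MeasureSpace (Ω m)]
    [∀ m, IsProbabilityMeasure (ℙ : Measure (Ω m))]
    (X : (m : ℕ) → Fin n → Ω m → ℝ)
    (hmeas : ∀ m i, Measurable (X m i))
    (hnonneg : ∀ m i ω, 0 ≤ X m i ω)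
    (hEpos : ∀ m, 0 < ∫ ω, X m ⟨0, by omega⟩ ω)
    (hbdd : ∀ m i, ∀ᵐ ω, X m i ω ≤ M * ∫ ω', X m ⟨0, by omega⟩ ω')
    (hsandwich : ∀ m, ∀ᵐ ω,
      (⨅ i, X m i ω) ≤ (∫ ω', X m ⟨0, by omega⟩ ω') ∧
      (∫ ω', X m ⟨0, by omega⟩ ω') ≤ ⨆ i, X m i ω)
    (hunstable : ∀ ε > (0 : ℝ), Tendsto
      (fun m => (ℙ : Measure (Ω m))
        {ω | (⨆ i, X m i ω) ≤ (1 + ε) * ⨅ i, X m i ω})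
      atTop (nhds 1)) :
    Tendsto
      (fun m => variance (X m ⟨0, by omega⟩) ℙ / (∫ ω, X m ⟨0, by omega⟩ ω) ^ 2)
      atTop (nhds 0) := by
  refine tendsto_zero_of_forall_le_sq_add (C := M ^ 2 + 1)
    (fun m => div_nonneg (variance_nonneg _ _) (sq_nonneg _))
    (fun ε hε => tendsto_measureReal_compl_of_tendsto_one
      (fun m => measurableSet_le (.iSup (hmeas m)) (measurable_const.mul (.iInf (hmeas m))))
      (hunstable ε hε))
    (fun ε hε m => variance_div_sq_le_of_spread (hmeas m) _ (hnonneg m _) hε.le (hEpos m)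
      (hbdd m _) (hsandwich m))
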